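/- arXiv:2404.10604 — 5 statements merged into one kernel-verified Lean document; each statement's English description precedes it below -/
import Mathlib

section
/- The Gibbs relation holds for the equation of state: for all ρ > 0 and θ > 0, θ·∂s/∂θ(ρ,θ) = ∂e/∂θ(ρ,θ) and θ·∂s/∂ρ(ρ,θ) = ∂e/∂ρ(ρ,θ) - p(ρ,θ)/ρ². -/
/-! With `Z = ρ θ^{-3/2}`, the chain rule together with `θ^{5/2} θ^{-3/2} = θ` reduces both
Gibbs relations to the single ODE `Z² S'(Z) = (3/2) Z P'(Z) - (5/2) P(Z)` for the profiles `P`, `S`.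
Both branches of the given `P`, `S` solve it, and at `Z = Z̃` the branches agree together with
their first derivatives, so `P` and `S` are differentiable there as well. -/

/-- `P(Z) = Z` for `Z ≤ Z̃`, `P(Z) = (3/5)·Z^{5/3}·Z̃^{-2/3} + (2/5)·Z̃` for `Z > Z̃`. -/
noncomputable def Pfun (Zt Z : ℝ) : ℝ :=
  if Z ≤ Zt then Z else (3 / 5) * Z ^ ((5 : ℝ) / 3) * Zt ^ (-((2 : ℝ) / 3)) + (2 / 5) * Zt

/-- `S(Z) = 1 - log(Z/Z̃)` for `Z ≤ Z̃`, `S(Z) = Z̃/Z` for `Z > Z̃`. -/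
noncomputable def Sfun (Zt Z : ℝ) : ℝ :=
  if Z ≤ Zt then 1 - Real.log (Z / Zt) else Zt / Z

/-- Pressure `p(ρ,θ) = θ^{5/2}·P(ρ·θ^{-3/2})`. -/
noncomputable def pfun (Zt ρ θ : ℝ) : ℝ :=
  θ ^ ((5 : ℝ) / 2) * Pfun Zt (ρ * θ ^ (-((3 : ℝ) / 2)))

/-- Specific internal energy `e(ρ,θ) = (3/2)·θ^{5/2}·P(ρ·θ^{-3/2})/ρ`. -/
noncomputable def efun (Zt ρ θ : ℝ) : ℝ :=
  (3 / 2) * θ ^ ((5 : ℝ) / 2) * Pfun Zt (ρ * θ ^ (-((3 : ℝ) / 2))) / ρ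

/-- Specific entropy `s(ρ,θ) = S(ρ·θ^{-3/2})`. -/
noncomputable def sfun (Zt ρ θ : ℝ) : ℝ :=
  Sfun Zt (ρ * θ ^ (-((3 : ℝ) / 2)))

open Real Filter Set

theorem hasDerivAt_ite_le {E : Type*} [NormedAddCommGroup E] [NormedSpace ℝ E]
    {f g : ℝ → E} {f' g' : E} {a x : ℝ}
    (hf : x ≤ a → HasDerivAt f f' x) (hg : a ≤ x → HasDerivAt g g' x)
    (hfg : f a = g a) (hfg' : x = a → f' = g') :
    HasDerivAt (fun y => if y ≤ a then f y else g y) (if x ≤ a then f' else g') x := by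
  rcases lt_trichotomy x a with hxa | rfl | hax
  · rw [if_pos hxa.le]
    refine (hf hxa.le).congr_of_eventuallyEq ?_
    filter_upwards [Iio_mem_nhds hxa] with y hy
    rw [if_pos (le_of_lt hy)]
  · rw [if_pos le_rfl]
    have hleft : HasDerivWithinAt (fun y => if y ≤ x then f y else g y) f' (Iic x) x :=
      (hf le_rfl).hasDerivWithinAt.congr (fun y hy => if_pos hy) (if_pos le_rfl)
    have hright : HasDerivWithinAt (fun y => if y ≤ x then f y else g y) f' (Ici x) x := by
      rw [hfg' rfl]
      refine (hg le_rfl).hasDerivWithinAt.congr (fun y hy => ?_) (by simp [hfg])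
      rcases (mem_Ici.mp hy).eq_or_lt with rfl | hlt
      · simp [hfg]
      · exact if_neg (not_le.mpr hlt)
    simpa [Iic_union_Ici] using hleft.union hright
  · rw [if_neg (not_le.mpr hax)]
    refine (hg hax.le).congr_of_eventuallyEq ?_
    filter_upwards [Ioi_mem_nhds hax] with y hy
    rw [if_neg (not_le.mpr hy)]

noncomputable def Pfun' (Zt Z : ℝ) : ℝ :=
  if Z ≤ Zt then 1 else Z ^ ((2 : ℝ) / 3) * Zt ^ (-((2 : ℝ) / 3))

noncomputable def Sfun' (Zt Z : ℝ) : ℝ :=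
  if Z ≤ Zt then -1 / Z else -Zt / Z ^ 2

section Profiles

variable {Zt Z : ℝ}

theorem hasDerivAt_Pfun (hZt : 0 < Zt) (hZ : 0 < Z) : HasDerivAt (Pfun Zt) (Pfun' Zt Z) Z := by
  have hZt23 : Zt ^ ((2 : ℝ) / 3) * Zt ^ (-((2 : ℝ) / 3)) = 1 := by
    rw [← rpow_add hZt]; norm_num
  refine hasDerivAt_ite_le (fun _ => hasDerivAt_id Z) (fun _ => ?_) ?_ ?_
  · refine ((((hasDerivAt_rpow_const (Or.inl hZ.ne')).const_mul (3 / 5)).mul_const _).add_const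
      _).congr_deriv ?_
    rw [show (5 : ℝ) / 3 - 1 = 2 / 3 by norm_num]
    ring
  · rw [show (5 : ℝ) / 3 = 1 + 2 / 3 by norm_num, rpow_add hZt, rpow_one]
    linear_combination (-3 / 5 * Zt) * hZt23
  · rintro rfl
    exact hZt23.symm

theorem hasDerivAt_Sfun (hZt : 0 < Zt) (hZ : 0 < Z) : HasDerivAt (Sfun Zt) (Sfun' Zt Z) Z := by
  refine hasDerivAt_ite_le (fun _ => ?_) (fun _ => ?_) ?_ ?_
  · refine (((hasDerivAt_id Z).div_const Zt).log (div_ne_zero hZ.ne' hZt.ne')).const_sub 1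
      |>.congr_deriv ?_
    simp only [id]
    field_simp
  · refine ((hasDerivAt_const Z Zt).div (hasDerivAt_id Z) hZ.ne').congr_deriv ?_
    simp
  · simp [hZt.ne']
  · rintro rfl
    field_simp

theorem sq_mul_Sfun'_eq (hZ : 0 < Z) :
    Z ^ 2 * Sfun' Zt Z = 3 / 2 * Z * Pfun' Zt Z - 5 / 2 * Pfun Zt Z := by
  unfold Sfun' Pfun' Pfun
  split_ifs
  · field_simp; ring
  · rw [show (5 : ℝ) / 3 = 1 + 2 / 3 by norm_num, rpow_add hZ, rpow_one]
    field_simp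
    ring

end Profiles

section Gibbs

variable {P S : ℝ → ℝ} {P' S' ρ θ : ℝ}

lemma hasDerivAt_mul_rpow_neg_three_halves (ρ : ℝ) (hθ : 0 < θ) :
    HasDerivAt (fun t : ℝ => ρ * t ^ (-((3 : ℝ) / 2)))
      (-(3 / 2) * (ρ * θ ^ (-((3 : ℝ) / 2))) / θ) θ := by
  refine ((hasDerivAt_rpow_const (Or.inl hθ.ne')).const_mul ρ).congr_deriv ?_
  rw [rpow_sub_one hθ.ne']
  ring

lemma hasDerivAt_rpow_five_halves (hθ : 0 < θ) :
    HasDerivAt (fun t : ℝ => t ^ ((5 : ℝ) / 2)) (5 / 2 * θ ^ ((5 : ℝ) / 2) / θ) θ := by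
  refine (hasDerivAt_rpow_const (Or.inl hθ.ne')).congr_deriv ?_
  rw [rpow_sub_one hθ.ne']
  ring

theorem gibbs_relation_of_ode (hρ : 0 < ρ) (hθ : 0 < θ)
    (hP : HasDerivAt P P' (ρ * θ ^ (-((3 : ℝ) / 2))))
    (hS : HasDerivAt S S' (ρ * θ ^ (-((3 : ℝ) / 2))))
    (hode : (ρ * θ ^ (-((3 : ℝ) / 2))) ^ 2 * S' =
      3 / 2 * (ρ * θ ^ (-((3 : ℝ) / 2))) * P' - 5 / 2 * P (ρ * θ ^ (-((3 : ℝ) / 2)))) :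
    ∃ dsθ deθ dsρ deρ : ℝ,
      HasDerivAt (fun t => S (ρ * t ^ (-((3 : ℝ) / 2)))) dsθ θ ∧
      HasDerivAt (fun t => 3 / 2 * t ^ ((5 : ℝ) / 2) * P (ρ * t ^ (-((3 : ℝ) / 2))) / ρ) deθ θ ∧
      HasDerivAt (fun r => S (r * θ ^ (-((3 : ℝ) / 2)))) dsρ ρ ∧
      HasDerivAt (fun r => 3 / 2 * θ ^ ((5 : ℝ) / 2) * P (r * θ ^ (-((3 : ℝ) / 2))) / r) deρ ρ ∧
      θ * dsθ = deθ ∧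
      θ * dsρ = deρ - θ ^ ((5 : ℝ) / 2) * P (ρ * θ ^ (-((3 : ℝ) / 2))) / ρ ^ 2 := by
  have hZθ := hasDerivAt_mul_rpow_neg_three_halves ρ hθ
  have hZρ : HasDerivAt (fun r : ℝ => r * θ ^ (-((3 : ℝ) / 2))) (θ ^ (-((3 : ℝ) / 2))) ρ := by
    simpa using (hasDerivAt_id ρ).mul_const (θ ^ (-((3 : ℝ) / 2)))
  have hAZ : θ ^ ((5 : ℝ) / 2) * θ ^ (-((3 : ℝ) / 2)) = θ := by
    rw [← rpow_add hθ]
    norm_num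
  have hB : 0 < θ ^ (-((3 : ℝ) / 2)) := rpow_pos_of_pos hθ _
  refine ⟨_, _, _, _, hS.comp θ hZθ,
    (((hasDerivAt_rpow_five_halves hθ).const_mul (3 / 2)).mul (hP.comp θ hZθ)).div_const ρ,
    hS.comp ρ hZρ, ((hP.comp ρ hZρ).const_mul _).div (hasDerivAt_id ρ) hρ.ne', ?_, ?_⟩
  all_goals
    simp only [Function.comp_apply]
    set B := θ ^ (-((3 : ℝ) / 2))
    set A := θ ^ ((5 : ℝ) / 2)
    set p := P (ρ * B)
    clear_value A B p
    -- eliminate `θ` in favour of `θ^{5/2} θ^{-3/2}`, leaving rational identities in `A`, `B`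
    subst hAZ
    obtain rfl : S' = (3 / 2 * (ρ * B) * P' - 5 / 2 * p) / (ρ * B) ^ 2 := by
      rw [← hode]; field_simp
    field_simp
    ring

end Gibbs

/-- The Gibbs relation for the equation of state: for all `ρ > 0`, `θ > 0`,
`θ·∂s/∂θ(ρ,θ) = ∂e/∂θ(ρ,θ)` and `θ·∂s/∂ρ(ρ,θ) = ∂e/∂ρ(ρ,θ) - p(ρ,θ)/ρ²`. -/
theorem stmt4 (Zt : ℝ) (hZt : 0 < Zt) :
    ∀ ρ θ : ℝ, 0 < ρ → 0 < θ →
      ∃ dsθ deθ dsρ deρ : ℝ,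
        HasDerivAt (fun t => sfun Zt ρ t) dsθ θ ∧
        HasDerivAt (fun t => efun Zt ρ t) deθ θ ∧
        HasDerivAt (fun r => sfun Zt r θ) dsρ ρ ∧
        HasDerivAt (fun r => efun Zt r θ) deρ ρ ∧
        θ * dsθ = deθ ∧
        θ * dsρ = deρ - pfun Zt ρ θ / ρ ^ 2 := by
  intro ρ θ hρ hθ
  have hZ : 0 < ρ * θ ^ (-((3 : ℝ) / 2)) := by positivity
  exact gibbs_relation_of_ode hρ hθ (hasDerivAt_Pfun hZt hZ) (hasDerivAt_Sfun hZt hZ)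
    (sq_mul_Sfun'_eq hZ)
end

section
/- For every fixed Z > Z̃, the function y ↦ F(y,Z) attains a strict global maximum over y ∈ (0,∞) at the unique point ȳ determined by ȳ^{-5/3} = (P(Z)/Z^{5/3})·Z̃^{2/3}, and the maximal value equals S(Z) - S(Z̃) + 5/2 - (5/2)·((P(Z)/Z^{5/3})·Z̃^{2/3})^{3/5} + (1/10)·(S(Z) - S(Z̃))², which moreover equals G(Z̃/Z). -/
/-- `F(y,Z) = S(Z) - S(Z̃) + 5/2 - 1/y - (3/2)·(P(Z)/Z^{5/3})·y^{2/3}·Z̃^{2/3}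
+ (1/10)·(S(Z) - S(Z̃))²`. -/
noncomputable def Ffun (Zt y Z : ℝ) : ℝ :=
  Sfun Zt Z - Sfun Zt Zt + 5 / 2 - 1 / y -
    (3 / 2) * (Pfun Zt Z / Z ^ ((5 : ℝ) / 3)) * y ^ ((2 : ℝ) / 3) * Zt ^ ((2 : ℝ) / 3) +
    (1 / 10) * (Sfun Zt Z - Sfun Zt Zt) ^ 2

/-- `G(Y) = Y + 3/2 - (5/2)·(3/5 + (2/5)·Y^{5/3})^{3/5} + (1/10)·(Y - 1)²`. -/
noncomputable def Gfun (Y : ℝ) : ℝ :=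
  Y + 3 / 2 - (5 / 2) * (3 / 5 + (2 / 5) * Y ^ ((5 : ℝ) / 3)) ^ ((3 : ℝ) / 5) +
    (1 / 10) * (Y - 1) ^ 2

/-!
Up to a constant, `F(·, Z)` is `-(y⁻¹ + (3/2) A y^{2/3})` with `A = (P(Z)/Z^{5/3}) Z̃^{2/3}`.
Weighted AM-GM with weights `2/5, 3/5` on `y⁻¹` and `A y^{2/3}` has geometric mean `A^{3/5}`,
independent of `y`, so `y⁻¹ + (3/2) A y^{2/3} ≥ (5/2) A^{3/5}`, with equality iff
`y⁻¹ = A y^{2/3}`, i.e. `y^{-5/3} = A`. For `Z > Z̃` one has `A = 3/5 + (2/5)(Z̃/Z)^{5/3}`,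
`S(Z) = Z̃/Z` and `S(Z̃) = 1`, which turns the maximal value into `G(Z̃/Z)`.
-/

open Real

section InvAddRpow

variable {r a y : ℝ}

lemma inv_add_mul_rpow_div_eq_at_minimizer (ha : 0 < a) (hr : 0 < r) :
    (a ^ (-(1 + r))⁻¹)⁻¹ + a * (a ^ (-(1 + r))⁻¹) ^ r / r = (1 + r) / r * a ^ (1 + r)⁻¹ := by
  have h1r : 1 + r ≠ 0 := by positivity
  have hinv : (a ^ (-(1 + r))⁻¹)⁻¹ = a ^ (1 + r)⁻¹ := by rw [inv_neg, rpow_neg ha.le, inv_inv]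
  have hpow : a * (a ^ (-(1 + r))⁻¹) ^ r = a ^ (1 + r)⁻¹ := by
    rw [← rpow_mul ha.le, ← rpow_one_add' ha.le]
    · congr 1; field_simp; ring
    · field_simp; ring_nf; positivity
  rw [hinv, hpow]
  field_simp
  ring

lemma lt_inv_add_mul_rpow_div_of_ne (ha : 0 < a) (hr : 0 < r) (hy : 0 < y)
    (hne : y ≠ a ^ (-(1 + r))⁻¹) :
    (1 + r) / r * a ^ (1 + r)⁻¹ < y⁻¹ + a * y ^ r / r := by
  have h1r : 0 < 1 + r := by positivity
  have hgeom : y⁻¹ ^ (r / (1 + r)) * (a * y ^ r) ^ (1 + r)⁻¹ = a ^ (1 + r)⁻¹ := by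
    rw [mul_rpow ha.le (by positivity), ← rpow_mul hy.le, inv_rpow hy.le, ← rpow_neg hy.le]
    rw [mul_left_comm, ← rpow_add hy, div_eq_mul_inv, neg_add_cancel, rpow_zero, mul_one]
  have hne' : y⁻¹ ≠ a * y ^ r := by
    refine fun h => hne ?_
    have hya : y ^ (-(1 + r)) = a := by
      rw [neg_add, rpow_add hy, rpow_neg_one, h, rpow_neg hy.le,
        mul_inv_cancel_right₀ (by positivity)]
    rw [← hya, rpow_rpow_inv hy.le (by linarith)]
  have hamgm := (geom_mean_lt_arith_mean2_weighted_iff_of_pos (div_pos hr h1r) (inv_pos.2 h1r)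
    (inv_pos.2 hy).le (by positivity) (by field_simp; ring)).2 hne'
  rw [hgeom] at hamgm
  calc (1 + r) / r * a ^ (1 + r)⁻¹
      < (1 + r) / r * (r / (1 + r) * y⁻¹ + (1 + r)⁻¹ * (a * y ^ r)) :=
        mul_lt_mul_of_pos_left hamgm (by positivity)
    _ = y⁻¹ + a * y ^ r / r := by field_simp

end InvAddRpow

section Profiles

variable {Zt Z : ℝ}

lemma Pfun_of_lt (hZ : Zt < Z) :
    Pfun Zt Z = 3 / 5 * Z ^ ((5 : ℝ) / 3) * Zt ^ (-((2 : ℝ) / 3)) + 2 / 5 * Zt :=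
  if_neg hZ.not_ge

lemma Sfun_of_lt (hZ : Zt < Z) : Sfun Zt Z = Zt / Z := if_neg hZ.not_ge

lemma Sfun_self (hZt : 0 < Zt) : Sfun Zt Zt = 1 := by
  rw [Sfun, if_pos le_rfl, div_self hZt.ne', log_one, sub_zero]

lemma Pfun_div_rpow_mul_rpow_of_lt (hZt : 0 < Zt) (hZ : Zt < Z) :
    Pfun Zt Z / Z ^ ((5 : ℝ) / 3) * Zt ^ ((2 : ℝ) / 3) =
      3 / 5 + 2 / 5 * (Zt / Z) ^ ((5 : ℝ) / 3) := by
  have hZ53 : 0 < Z ^ ((5 : ℝ) / 3) := rpow_pos_of_pos (hZt.trans hZ) _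
  have hcancel : Zt ^ (-((2 : ℝ) / 3)) * Zt ^ ((2 : ℝ) / 3) = 1 := by
    rw [← rpow_add hZt]; norm_num
  have hmul : Zt * Zt ^ ((2 : ℝ) / 3) = Zt ^ ((5 : ℝ) / 3) := by
    rw [← rpow_one_add' hZt.le (by norm_num)]; norm_num
  rw [Pfun_of_lt hZ, div_rpow hZt.le (hZt.trans hZ).le]
  field_simp
  linear_combination (3 * Z ^ ((5 : ℝ) / 3)) * hcancel + 2 * hmul

lemma Ffun_eq_sub_inv_add (Zt y Z : ℝ) :
    Ffun Zt y Z = Sfun Zt Z - Sfun Zt Zt + 5 / 2 + 1 / 10 * (Sfun Zt Z - Sfun Zt Zt) ^ 2 -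
      (y⁻¹ + Pfun Zt Z / Z ^ ((5 : ℝ) / 3) * Zt ^ ((2 : ℝ) / 3) * y ^ ((2 : ℝ) / 3) / (2 / 3)) := by
  rw [Ffun]; ring

end Profiles

/-- For every fixed `Z > Z̃`, the function `y ↦ F(y,Z)` attains a strict global maximum
over `y ∈ (0,∞)` at the unique point `ȳ` determined by `ȳ^{-5/3} = (P(Z)/Z^{5/3})·Z̃^{2/3}`,
and the maximal value equals
`S(Z) - S(Z̃) + 5/2 - (5/2)·((P(Z)/Z^{5/3})·Z̃^{2/3})^{3/5} + (1/10)·(S(Z) - S(Z̃))²`,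
which moreover equals `G(Z̃/Z)`. -/
theorem stmt11 (Zt : ℝ) (hZt : 0 < Zt) (Z : ℝ) (hZ : Zt < Z) :
    let A := Pfun Zt Z / Z ^ ((5 : ℝ) / 3) * Zt ^ ((2 : ℝ) / 3)
    let ybar := A ^ (-((3 : ℝ) / 5))
    0 < ybar ∧
    ybar ^ (-((5 : ℝ) / 3)) = A ∧
    (∀ y : ℝ, 0 < y → y ^ (-((5 : ℝ) / 3)) = A → y = ybar) ∧
    (∀ y : ℝ, 0 < y → y ≠ ybar → Ffun Zt y Z < Ffun Zt ybar Z) ∧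
    Ffun Zt ybar Z =
      Sfun Zt Z - Sfun Zt Zt + 5 / 2 - (5 / 2) * A ^ ((3 : ℝ) / 5) +
        (1 / 10) * (Sfun Zt Z - Sfun Zt Zt) ^ 2 ∧
    Ffun Zt ybar Z = Gfun (Zt / Z) := by
  intro A ybar
  have hA_def : Pfun Zt Z / Z ^ ((5 : ℝ) / 3) * Zt ^ ((2 : ℝ) / 3) = A := rfl
  have hA_eq : A = 3 / 5 + 2 / 5 * (Zt / Z) ^ ((5 : ℝ) / 3) := Pfun_div_rpow_mul_rpow_of_lt hZt hZ
  have hA : 0 < A := by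
    have hZpos : 0 < Z := hZt.trans hZ
    rw [hA_eq]; positivity
  have hr : (0 : ℝ) < 2 / 3 := by norm_num
  have h53 : -((5 : ℝ) / 3) = -(1 + 2 / 3) := by norm_num
  have hybar : ybar = A ^ (-(1 + 2 / 3 : ℝ))⁻¹ := by norm_num [ybar]
  have hmin : Ffun Zt ybar Z = Sfun Zt Z - Sfun Zt Zt + 5 / 2 - 5 / 2 * A ^ ((3 : ℝ) / 5) +
      1 / 10 * (Sfun Zt Z - Sfun Zt Zt) ^ 2 := by
    rw [Ffun_eq_sub_inv_add, hA_def, hybar, inv_add_mul_rpow_div_eq_at_minimizer hA hr]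
    norm_num
    ring
  refine ⟨rpow_pos_of_pos hA _, ?_, fun y hy h => ?_, fun y hy hne => ?_, hmin, ?_⟩
  · rw [hybar, h53]
    exact rpow_inv_rpow hA.le (by norm_num)
  · rw [hybar, ← h, h53]
    exact (rpow_rpow_inv hy.le (by norm_num)).symm
  · rw [Ffun_eq_sub_inv_add, Ffun_eq_sub_inv_add, hA_def, hybar,
      inv_add_mul_rpow_div_eq_at_minimizer hA hr]
    have := lt_inv_add_mul_rpow_div_of_ne hA hr hy (hybar ▸ hne)
    linarith
  · rw [hmin, Sfun_of_lt hZ, Sfun_self hZt, hA_eq, Gfun]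
    ring
end

section
/- The key pointwise inequality holds: F(y,Z) ≤ 0 for all y > 0 and all Z ≥ Z̃, with equality if and only if y = 1 and Z = Z̃. -/


lemma bern1 (u : ℝ) (hu : 0 ≤ u) (h1u : 0 ≤ 1 - u) :
    3*(u^3+4)^2 ≤ 5*(9+6*u^5)*(11/10 + u/5 - 3/10*u^2)^2 := by
  nlinarith [pow_nonneg h1u 9,
    mul_nonneg (pow_nonneg hu 1) (pow_nonneg h1u 8),
    mul_nonneg (pow_nonneg hu 2) (pow_nonneg h1u 7),
    mul_nonneg (pow_nonneg hu 3) (pow_nonneg h1u 6),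
    mul_nonneg (pow_nonneg hu 4) (pow_nonneg h1u 5),
    mul_nonneg (pow_nonneg hu 5) (pow_nonneg h1u 4),
    mul_nonneg (pow_nonneg hu 6) (pow_nonneg h1u 3),
    mul_nonneg (pow_nonneg hu 7) (pow_nonneg h1u 2)]

lemma bern2 (u : ℝ) (hu : 0 ≤ u) (h1u : 0 ≤ 1 - u) :
    (u^3+4)^2*(11/10 + u/5 - 3/10*u^2)^3 + 2*(1-u)^2 ≤ 25 := by
  nlinarith [pow_nonneg h1u 12,
    mul_nonneg (pow_nonneg hu 1) (pow_nonneg h1u 11),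
    mul_nonneg (pow_nonneg hu 2) (pow_nonneg h1u 10),
    mul_nonneg (pow_nonneg hu 3) (pow_nonneg h1u 9),
    mul_nonneg (pow_nonneg hu 4) (pow_nonneg h1u 8),
    mul_nonneg (pow_nonneg hu 5) (pow_nonneg h1u 7),
    mul_nonneg (pow_nonneg hu 6) (pow_nonneg h1u 6),
    mul_nonneg (pow_nonneg hu 7) (pow_nonneg h1u 5),
    mul_nonneg (pow_nonneg hu 8) (pow_nonneg h1u 4),
    mul_nonneg (pow_nonneg hu 9) (pow_nonneg h1u 3),
    mul_nonneg (pow_nonneg hu 10) (pow_nonneg h1u 2)]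

lemma Hkey (a u : ℝ) (ha : 0 < a) (hu : 0 < u) (hu1 : u ≤ 1) :
    4/5*(1-u)^2 ≤ 10+9*a^5+6*a^5*u^5-16*a^3-8*a^3*u^3-a^3*u^6 := by
  have h1u : (0:ℝ) ≤ 1 - u := by linarith
  obtain ⟨c, hc_def⟩ : ∃ c : ℝ, c = 11/10 + u/5 - 3/10*u^2 := ⟨_, rfl⟩
  have hc : 0 < c := by rw [hc_def]; nlinarith [sq_nonneg u, mul_nonneg hu.le h1u]
  have hP1 : 3*(u^3+4)^2 ≤ 5*(9+6*u^5)*c^2 := by rw [hc_def]; exact bern1 u hu.le h1u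
  have hP2 : (u^3+4)^2*c^3 + 2*(1-u)^2 ≤ 25 := by rw [hc_def]; exact bern2 u hu.le h1u
  have hcub : 0 < 3*a^3+6*a^2*c+4*a*c^2+2*c^3 := by
    have h0 := pow_pos ha 3
    have h3 := pow_pos hc 3
    have h1 : 0 < a^2*c := mul_pos (pow_pos ha 2) hc
    have h2 : 0 < a*c^2 := mul_pos ha (pow_pos hc 2)
    nlinarith
  have hAM : 5*c^2*a^3 ≤ 3*a^5 + 2*c^5 := by
    nlinarith [mul_nonneg (sq_nonneg (a-c)) hcub.le]
  have e1 : 0 ≤ a^5 * (5*(9+6*u^5)*c^2 - 3*(u^3+4)^2) :=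
    mul_nonneg (pow_nonneg ha.le 5) (by linarith)
  have e2 : 0 ≤ (u^3+4)^2 * (3*a^5 + 2*c^5 - 5*c^2*a^3) :=
    mul_nonneg (sq_nonneg _) (by linarith)
  have e3 : 0 ≤ 2*c^2 * (25 - (u^3+4)^2*c^3 - 2*(1-u)^2) :=
    mul_nonneg (by positivity) (by linarith)
  have hc2 : 0 < c^2 := pow_pos hc 2
  nlinarith [e1, e2, e3, hc2, sq_nonneg (1-u)]

lemma Hzero (a u : ℝ) (ha : 0 < a) (hu : 0 < u) (hu1 : u ≤ 1)
    (h0 : 10+9*a^5+6*a^5*u^5-16*a^3-8*a^3*u^3-a^3*u^6 = 0) : a = 1 ∧ u = 1 := by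
  have h2 := Hkey a u ha hu hu1
  have hu' : u = 1 := by nlinarith [sq_nonneg (1-u)]
  subst hu'
  have cub : 0 < 3*a^3+6*a^2+4*a+2 := by nlinarith [pow_pos ha 3, mul_pos ha ha]
  refine ⟨?_, rfl⟩
  have hsq : (a-1)^2 ≤ 0 := by nlinarith [cub]
  have : a - 1 = 0 := by nlinarith [sq_nonneg (a-1)]
  linarith

set_option maxHeartbeats 1000000 in
/-- The key pointwise inequality: `F(y,Z) ≤ 0` for all `y > 0` and all `Z ≥ Z̃`, with
equality if and only if `y = 1` and `Z = Z̃`. -/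
theorem stmt16 (Zt : ℝ) (hZt : 0 < Zt) :
    ∀ y Z : ℝ, 0 < y → Zt ≤ Z →
      Ffun Zt y Z ≤ 0 ∧ (Ffun Zt y Z = 0 ↔ y = 1 ∧ Z = Zt) := by
  intro y Z hy hZZ
  have hZ : 0 < Z := lt_of_lt_of_le hZt hZZ
  have hSt : Sfun Zt Zt = 1 := by
    unfold Sfun
    rw [if_pos le_rfl, div_self hZt.ne', Real.log_one]
    ring
  have hS : Sfun Zt Z = Zt / Z := by
    unfold Sfun
    rcases eq_or_lt_of_le hZZ with h | h
    · rw [← h, if_pos le_rfl, div_self hZt.ne', Real.log_one]; ring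
    · rw [if_neg (not_le.2 h)]
  have hP : Pfun Zt Z = (3 / 5) * Z ^ ((5 : ℝ) / 3) * Zt ^ (-((2 : ℝ) / 3)) + (2 / 5) * Zt := by
    unfold Pfun
    rcases eq_or_lt_of_le hZZ with h | h
    · rw [← h, if_pos le_rfl]
      have h1 : Zt ^ ((5 : ℝ) / 3) * Zt ^ (-((2 : ℝ) / 3)) = Zt := by
        rw [← Real.rpow_add hZt]
        norm_num
      rw [mul_assoc, h1]; ring
    · rw [if_neg (not_le.2 h)]
  -- variables
  set a : ℝ := y ^ ((1 : ℝ) / 3) with ha_def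
  set u : ℝ := (Zt / Z) ^ ((1 : ℝ) / 3) with hu_def
  have ha : 0 < a := Real.rpow_pos_of_pos hy _
  have ht : 0 < Zt / Z := div_pos hZt hZ
  have hu : 0 < u := Real.rpow_pos_of_pos ht _
  have hu1 : u ≤ 1 := Real.rpow_le_one ht.le ((div_le_one hZ).2 hZZ) (by norm_num)
  have hy3 : a ^ (3 : ℕ) = y := by
    rw [ha_def, ← Real.rpow_natCast (y ^ ((1:ℝ)/3)) 3, ← Real.rpow_mul hy.le]
    norm_num
  have hy2 : a ^ (2 : ℕ) = y ^ ((2 : ℝ) / 3) := by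
    rw [ha_def, ← Real.rpow_natCast (y ^ ((1:ℝ)/3)) 2, ← Real.rpow_mul hy.le]
    norm_num
  have hu3 : u ^ (3 : ℕ) = Zt / Z := by
    rw [hu_def, ← Real.rpow_natCast ((Zt/Z) ^ ((1:ℝ)/3)) 3, ← Real.rpow_mul ht.le]
    norm_num
  have hu5 : u ^ (5 : ℕ) = Zt ^ ((5 : ℝ) / 3) / Z ^ ((5 : ℝ) / 3) := by
    rw [hu_def, ← Real.rpow_natCast ((Zt/Z) ^ ((1:ℝ)/3)) 5, ← Real.rpow_mul ht.le,
      ← Real.div_rpow hZt.le hZ.le]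
    norm_num
  have hZ53 : (0 : ℝ) < Z ^ ((5 : ℝ) / 3) := Real.rpow_pos_of_pos hZ _
  have hZt23 : (0 : ℝ) < Zt ^ ((2 : ℝ) / 3) := Real.rpow_pos_of_pos hZt _
  have hneg : Zt ^ (-((2 : ℝ) / 3)) * Zt ^ ((2 : ℝ) / 3) = 1 := by
    rw [← Real.rpow_add hZt]
    norm_num
  have hZt53 : Zt * Zt ^ ((2 : ℝ) / 3) = Zt ^ ((5 : ℝ) / 3) := by
    nth_rewrite 1 [← Real.rpow_one Zt]
    rw [← Real.rpow_add hZt]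
    norm_num
  have hu5' : u ^ (5 : ℕ) = Zt * Zt ^ ((2 : ℝ) / 3) / Z ^ ((5 : ℝ) / 3) := by
    rw [hu5, ← hZt53]
  have hinv : Zt ^ (-((2 : ℝ) / 3)) = (Zt ^ ((2 : ℝ) / 3))⁻¹ := Real.rpow_neg hZt.le _
  have hFf : Ffun Zt y Z =
      u^3 - 1 + 5/2 - 1/a^3 - (3/2) * ((3/5 + 2/5*u^5) * a^2) + (1/10)*(u^3 - 1)^2 := by
    unfold Ffun
    rw [hS, hSt, hP, hu3, ← hy2, hy3, hu5', hinv]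
    field_simp
  have h10 : (0:ℝ) < 10 * a ^ 3 := by positivity
  have hFH : Ffun Zt y Z * (10*a^3) =
      -(10+9*a^5+6*a^5*u^5-16*a^3-8*a^3*u^3-a^3*u^6) := by
    rw [hFf]; field_simp; ring
  have hkey := Hkey a u ha hu hu1
  have hH0 : 0 ≤ 10+9*a^5+6*a^5*u^5-16*a^3-8*a^3*u^3-a^3*u^6 := by
    nlinarith [sq_nonneg (1-u)]
  refine ⟨by nlinarith [hFH, hH0, h10], ?_, ?_⟩
  · intro h0
    have hHz : 10+9*a^5+6*a^5*u^5-16*a^3-8*a^3*u^3-a^3*u^6 = 0 := by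
      have h := hFH
      rw [h0, zero_mul] at h
      linarith
    obtain ⟨ha1, hu1'⟩ := Hzero a u ha hu hu1 hHz
    constructor
    · rw [← hy3, ha1]; norm_num
    · have hZZt : Zt / Z = 1 := by rw [← hu3, hu1']; norm_num
      have := (div_eq_one_iff_eq hZ.ne').mp hZZt
      exact this.symm
  · rintro ⟨h1, h2⟩
    have ha1 : a = 1 := by rw [ha_def, h1, Real.one_rpow]
    have hu1' : u = 1 := by rw [hu_def, h2, div_self hZt.ne', Real.one_rpow]
    have hz : Ffun Zt y Z * (10*a^3) = 0 := by
      rw [hFH, ha1, hu1']; norm_num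
    rcases mul_eq_zero.mp hz with h | h
    · exact h
    · exact absurd h h10.ne'
end

section
/- The pointwise relative-entropy inequality holds for the equation of state: for all ρ > 0, θ > 0, θ̃ > 0 and ρ̃ = Z̃·θ̃^{3/2} (so that ρ̃·θ̃^{-3/2} = Z̃ and e(ρ̃,θ̃) = (3/2)·θ̃), one has θ̃·(s(ρ,θ) - s(ρ̃,θ̃)) + (5/3)·e(ρ̃,θ̃) - (2/3)·(ρ̃/ρ)·e(ρ̃,θ̃) - e(ρ,θ) + (1/10)·θ̃·(s(ρ,θ) - s(ρ̃,θ̃))² ≤ 0. -/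
/-- Auxiliary: `(x^a)^n = x^(a*n)` for `x ≥ 0`. -/
lemma aux_rpow_pow (x : ℝ) (hx : 0 ≤ x) (a : ℝ) (n : ℕ) : (x ^ a) ^ (n : ℕ) = x ^ (a * n) := by
  rw [← Real.rpow_natCast (x ^ a) n, ← Real.rpow_mul hx]

/-- Auxiliary weighted AM-GM: `5 c³ t² ≤ 2 t⁵ + 3 c⁵` for `t, c ≥ 0`. -/
lemma aux_key5 (t c : ℝ) (ht : 0 ≤ t) (hc : 0 ≤ c) : 5 * c^3 * t^2 ≤ 2*t^5 + 3*c^5 := by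
  nlinarith [sq_nonneg (t-c), sq_nonneg (t+c), sq_nonneg (t^2-c^2), sq_nonneg (t*c),
    mul_nonneg ht hc, sq_nonneg (t^2+c^2-2*t*c), mul_nonneg (mul_nonneg ht ht) hc,
    mul_nonneg (mul_nonneg hc hc) ht]

/-- Auxiliary polynomial inequality for the supercritical case. -/
lemma aux_case2poly (v : ℝ) (h0 : 0 ≤ v) (h1 : v ≤ 1) :
    (v^3+4)^10 ≤ 5^7*(3+2*v^5)^3 := by
  have hp : ∀ n:ℕ, v^n ≤ 1 := fun n => pow_le_one₀ h0 h1
  have hn : ∀ n:ℕ, 0 ≤ v^n := fun n => pow_nonneg h0 n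
  have h2 : (0:ℝ) ≤ (1060799:ℝ) + (2121598)*v^1 + (3182397)*v^2 + (1621756)*v^3 + (61115)*v^4 + (2719224)*v^5 + (2428213)*v^6 + (2137202)*v^7 + (1846191)*v^8 - (410900)*v^9 + (144509)*v^10 + (699918)*v^11 + (395167)*v^12 + (90416)*v^13 - (214335)*v^14 - (152134)*v^15 - (89933)*v^16 - (27732)*v^17 - (19291)*v^18 - (10850)*v^19 - (2409)*v^20 - (1648)*v^21 - (887)*v^22 - (126)*v^23 - (85)*v^24 - (44)*v^25 - (3)*v^26 - (2)*v^27 - (1)*v^28 := by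
    linarith [hp 9, hp 14, hp 15, hp 16, hp 17, hp 18, hp 19, hp 20, hp 21, hp 22, hp 23,
      hp 24, hp 25, hp 26, hp 27, hp 28, hn 1, hn 2, hn 3, hn 4, hn 5, hn 6, hn 7, hn 8,
      hn 10, hn 11, hn 12, hn 13]
  nlinarith [mul_nonneg (sq_nonneg (v-1)) h2]

/-- Core inequality: `m¹⁰ ≤ v² · P(Z)/Z` where `m³ = (S(Z)+4)/5` and `v = (Z̃/Z)^{1/3}`. -/
lemma aux_core (Zt Z : ℝ) (hZt : 0 < Zt) (hZ : 0 < Z) :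
    ∃ m : ℝ, 0 ≤ m ∧ m^3 = (Sfun Zt Z + 4)/5 ∧
      m^10 ≤ ((Zt/Z) ^ ((1:ℝ)/3))^2 * (Pfun Zt Z / Z) := by
  set v : ℝ := (Zt/Z) ^ ((1:ℝ)/3) with hv
  have hw : 0 < Zt/Z := div_pos hZt hZ
  have hv0 : 0 < v := Real.rpow_pos_of_pos hw _
  have hv3 : v^3 = Zt/Z := by
    rw [hv, aux_rpow_pow _ hw.le]; norm_num
  rcases le_or_gt Z Zt with hle | hlt
  · -- subcritical: Z ≤ Zt
    have hσ : Sfun Zt Z = 1 - Real.log (Z / Zt) := by rw [Sfun, if_pos hle]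
    have hP : Pfun Zt Z = Z := by rw [Pfun, if_pos hle]
    set L : ℝ := Real.log (Zt / Z) with hL
    have hL0 : 0 ≤ L := Real.log_nonneg ((one_le_div hZ).mpr hle)
    have hlog : Real.log (Z / Zt) = -L := by
      rw [hL, Real.log_div (ne_of_gt hZ) (ne_of_gt hZt),
        Real.log_div (ne_of_gt hZt) (ne_of_gt hZ)]; ring
    have hs4 : (Sfun Zt Z + 4)/5 = 1 + L/5 := by rw [hσ, hlog]; ring
    have hs4nn : (0:ℝ) ≤ (Sfun Zt Z + 4)/5 := by rw [hs4]; linarith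
    refine ⟨((Sfun Zt Z + 4)/5) ^ ((1:ℝ)/3), Real.rpow_nonneg hs4nn _, ?_, ?_⟩
    · rw [aux_rpow_pow _ hs4nn]; norm_num
    have hm3 : (((Sfun Zt Z + 4)/5) ^ ((1:ℝ)/3))^3 = 1 + L/5 := by
      rw [aux_rpow_pow _ hs4nn]; norm_num [hs4]
    set m : ℝ := ((Sfun Zt Z + 4)/5) ^ ((1:ℝ)/3) with hm
    have hm0 : 0 ≤ m := Real.rpow_nonneg hs4nn _
    have hK : Pfun Zt Z / Z = 1 := by rw [hP, div_self (ne_of_gt hZ)]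
    rw [hK, mul_one]
    have hexp : v^3 = Real.exp L := by rw [hv3, hL, Real.exp_log hw]
    refine le_of_pow_le_pow_left₀ (by norm_num : (3:ℕ) ≠ 0) (sq_nonneg v) ?_
    have e1 : (m^10)^3 = (m^3)^10 := by ring
    have e2 : ((v:ℝ)^2)^3 = (v^3)^2 := by ring
    rw [e1, e2, hm3, hexp]
    have h1 : 1 + L/5 ≤ Real.exp (L/5) := by linarith [Real.add_one_le_exp (L/5)]
    have h2 : (1 + L/5)^10 ≤ Real.exp (L/5)^10 :=
      pow_le_pow_left₀ (by linarith) h1 10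
    have h3 : Real.exp (L/5)^10 = Real.exp L ^ 2 := by
      rw [← Real.exp_nat_mul, ← Real.exp_nat_mul]; norm_num; ring
    rw [← h3]; exact h2
  · -- supercritical: Zt < Z
    have hnle : ¬ Z ≤ Zt := not_le.mpr hlt
    have hσ : Sfun Zt Z = Zt/Z := by rw [Sfun, if_neg hnle]
    have hP : Pfun Zt Z = (3 / 5) * Z ^ ((5 : ℝ) / 3) * Zt ^ (-((2 : ℝ) / 3)) + (2 / 5) * Zt := by
      rw [Pfun, if_neg hnle]
    have hw1 : Zt/Z ≤ 1 := (div_le_one hZ).mpr hlt.le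
    have hv1 : v ≤ 1 := Real.rpow_le_one hw.le hw1 (by norm_num)
    have hs4 : (Sfun Zt Z + 4)/5 = (v^3 + 4)/5 := by rw [hσ, hv3]
    have hs4nn : (0:ℝ) ≤ (Sfun Zt Z + 4)/5 := by
      rw [hs4]; positivity
    refine ⟨((Sfun Zt Z + 4)/5) ^ ((1:ℝ)/3), Real.rpow_nonneg hs4nn _, ?_, ?_⟩
    · rw [aux_rpow_pow _ hs4nn]; norm_num
    set m : ℝ := ((Sfun Zt Z + 4)/5) ^ ((1:ℝ)/3) with hm
    have hm0 : 0 ≤ m := Real.rpow_nonneg hs4nn _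
    have hm3 : m^3 = (v^3 + 4)/5 := by
      rw [hm, aux_rpow_pow _ hs4nn]; norm_num [hs4]
    -- compute v² · P/Z = 3/5 + (2/5) v⁵
    have hv2 : v^2 = Zt^((2:ℝ)/3) / Z^((2:ℝ)/3) := by
      rw [hv, aux_rpow_pow _ hw.le]
      norm_num
      exact Real.div_rpow hZt.le hZ.le _
    have hZt23 : (0:ℝ) < Zt^((2:ℝ)/3) := Real.rpow_pos_of_pos hZt _
    have hZ23 : (0:ℝ) < Z^((2:ℝ)/3) := Real.rpow_pos_of_pos hZ _
    have hZ53 : Z^((5:ℝ)/3) = Z^((2:ℝ)/3) * Z := by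
      rw [show (5:ℝ)/3 = 2/3 + 1 by norm_num, Real.rpow_add hZ, Real.rpow_one]
    have hZtneg : Zt^(-((2:ℝ)/3)) = (Zt^((2:ℝ)/3))⁻¹ := Real.rpow_neg hZt.le _
    have hvK : v^2 * (Pfun Zt Z / Z) = 3/5 + (2/5)*v^5 := by
      have hv5 : v^5 = v^3 * v^2 := by ring
      rw [hP, hZtneg, hZ53, hv5, hv3, hv2]
      field_simp
    rw [hvK]
    refine le_of_pow_le_pow_left₀ (by norm_num : (3:ℕ) ≠ 0) (by positivity) ?_
    have e1 : (m^10)^3 = (m^3)^10 := by ring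
    rw [e1, hm3]
    have hA : (((v^3+4))/5)^10 = (v^3+4)^10 / 5^10 := div_pow _ _ _
    have hB : (3/5+(2/5)*v^5)^3 = (3+2*v^5)^3 / 125 := by ring
    rw [hA, hB]
    linarith [aux_case2poly v hv0.le hv1]

set_option maxHeartbeats 1000000 in
/-- The pointwise relative-entropy inequality: for all `ρ > 0`, `θ > 0`, `θ̃ > 0` and
`ρ̃ = Z̃·θ̃^{3/2}` (so `ρ̃·θ̃^{-3/2} = Z̃` and `e(ρ̃,θ̃) = (3/2)·θ̃`), one has
`θ̃·(s(ρ,θ) - s(ρ̃,θ̃)) + (5/3)·e(ρ̃,θ̃) - (2/3)·(ρ̃/ρ)·e(ρ̃,θ̃) - e(ρ,θ)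
+ (1/10)·θ̃·(s(ρ,θ) - s(ρ̃,θ̃))² ≤ 0`. -/
theorem stmt17 (Zt : ℝ) (hZt : 0 < Zt) :
    ∀ ρ θ θt : ℝ, 0 < ρ → 0 < θ → 0 < θt →
      let ρt := Zt * θt ^ ((3 : ℝ) / 2)
      ρt * θt ^ (-((3 : ℝ) / 2)) = Zt ∧
      efun Zt ρt θt = (3 / 2) * θt ∧
      θt * (sfun Zt ρ θ - sfun Zt ρt θt) + (5 / 3) * efun Zt ρt θt -
          (2 / 3) * (ρt / ρ) * efun Zt ρt θt - efun Zt ρ θ +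
          (1 / 10) * θt * (sfun Zt ρ θ - sfun Zt ρt θt) ^ 2 ≤ 0 := by
  intro ρ θ θt hρ hθ hθt
  have hθt32 : (0:ℝ) < θt ^ ((3:ℝ)/2) := Real.rpow_pos_of_pos hθt _
  have hθ32 : (0:ℝ) < θ ^ ((3:ℝ)/2) := Real.rpow_pos_of_pos hθ _
  have h1 : Zt * θt ^ ((3 : ℝ) / 2) * θt ^ (-((3 : ℝ) / 2)) = Zt := by
    rw [mul_assoc, ← Real.rpow_add hθt]
    norm_num
  have hθt52 : θt ^ ((5:ℝ)/2) = θt ^ ((3:ℝ)/2) * θt := by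
    rw [show (5:ℝ)/2 = 3/2 + 1 by norm_num, Real.rpow_add hθt, Real.rpow_one]
  have h2 : efun Zt (Zt * θt ^ ((3 : ℝ) / 2)) θt = (3 / 2) * θt := by
    rw [efun, h1, Pfun, if_pos le_rfl, hθt52]
    field_simp
  refine ⟨h1, h2, ?_⟩
  -- main inequality
  set Z : ℝ := ρ * θ ^ (-((3:ℝ)/2)) with hZdef
  have hZ : 0 < Z := mul_pos hρ (Real.rpow_pos_of_pos hθ _)
  have hρZ : ρ = Z * θ ^ ((3:ℝ)/2) := by
    rw [hZdef, mul_assoc, ← Real.rpow_add hθ]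
    norm_num
  have hst : sfun Zt (Zt * θt ^ ((3 : ℝ) / 2)) θt = 1 := by
    rw [sfun, h1, Sfun, if_pos le_rfl, div_self (ne_of_gt hZt), Real.log_one]
    ring
  set K : ℝ := Pfun Zt Z / Z with hKdef
  have hθ52 : θ ^ ((5:ℝ)/2) = θ ^ ((3:ℝ)/2) * θ := by
    rw [show (5:ℝ)/2 = 3/2 + 1 by norm_num, Real.rpow_add hθ, Real.rpow_one]
  have he : efun Zt ρ θ = (3/2) * θ * K := by
    rw [efun, hKdef]
    rw [show ρ * θ ^ (-((3:ℝ)/2)) = Z by rw [hZdef], hθ52]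
    rw [hρZ]
    field_simp
  -- variables v, y
  set v : ℝ := (Zt/Z) ^ ((1:ℝ)/3) with hv
  have hw : 0 < Zt/Z := div_pos hZt hZ
  have hv0 : 0 < v := Real.rpow_pos_of_pos hw _
  have hv3 : v^3 = Zt/Z := by rw [hv, aux_rpow_pow _ hw.le]; norm_num
  set y : ℝ := (θt/θ) ^ ((1:ℝ)/2) with hy
  have hx : 0 < θt/θ := div_pos hθt hθ
  have hy0 : 0 ≤ y := Real.rpow_nonneg hx.le _
  have hy2 : y^2 = θt/θ := by rw [hy, aux_rpow_pow _ hx.le]; norm_num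
  have hy3 : y^3 = (θt/θ) ^ ((3:ℝ)/2) := by
    rw [hy, aux_rpow_pow _ hx.le]; norm_num
  have hθteq : θt = θ * y^2 := by
    rw [hy2]; field_simp
  have hρtρ : (Zt * θt ^ ((3 : ℝ) / 2)) / ρ = v^3 * y^3 := by
    rw [hρZ, hv3, hy3, Real.div_rpow hθt.le hθ.le]
    field_simp
  obtain ⟨m, hm0, hm3, hcore⟩ := aux_core Zt Z hZt hZ
  have hσ : sfun Zt ρ θ = 5*m^3 - 4 := by
    rw [sfun, ← hZdef, hm3]; ring
  -- main estimate: 5 m⁶ y² ≤ 2 v³ y⁵ + 3 K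
  have hkey := aux_key5 (v*y) (m^2) (mul_nonneg hv0.le hy0) (sq_nonneg m)
  have h3 : v^2 * (5*m^6*y^2) ≤ v^2 * (2*v^3*y^5 + 3*K) := by linarith [hkey, hcore]
  have hmain : 5*m^6*y^2 ≤ 2*v^3*y^5 + 3*K :=
    le_of_mul_le_mul_left h3 (pow_pos hv0 2)
  rw [hst, h2, he, hσ, hρtρ, hθteq]
  linarith [mul_le_mul_of_nonneg_left hmain hθ.le]
end

section
/- The entropy is dominated by the energy: there exists a constant C > 0, depending only on Z̃, such that for all ρ > 0, θ > 0 and a ≥ 0, the total entropy satisfies 0 ≤ ρ·S(ρ·θ^{-3/2}) + 4a·θ³ ≤ C·(a·θ³ + ρ·(1 + |log ρ|) + ρ·max(log θ, 0)), and the total energy satisfies (3/2)·θ^{5/2}·P(ρ·θ^{-3/2}) + 3a·θ⁴ ≥ C^{-1}·(a·θ⁴ + ρ^{5/3} + ρ·θ). -/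
set_option maxHeartbeats 1000000 in
/-- The entropy is dominated by the energy: there is a constant `C > 0`, depending only on
`Z̃`, such that for all `ρ > 0`, `θ > 0` and `a ≥ 0`, the total entropy satisfies
`0 ≤ ρ·S(ρ·θ^{-3/2}) + 4a·θ³ ≤ C·(a·θ³ + ρ·(1 + |log ρ|) + ρ·max(log θ, 0))`, and the
total energy satisfies
`(3/2)·θ^{5/2}·P(ρ·θ^{-3/2}) + 3a·θ⁴ ≥ C⁻¹·(a·θ⁴ + ρ^{5/3} + ρ·θ)`. -/
theorem stmt18 (Zt : ℝ) (hZt : 0 < Zt) :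
    ∃ C : ℝ, 0 < C ∧
      ∀ ρ θ a : ℝ, 0 < ρ → 0 < θ → 0 ≤ a →
        0 ≤ ρ * Sfun Zt (ρ * θ ^ (-((3 : ℝ) / 2))) + 4 * a * θ ^ 3 ∧
        ρ * Sfun Zt (ρ * θ ^ (-((3 : ℝ) / 2))) + 4 * a * θ ^ 3 ≤
          C * (a * θ ^ 3 + ρ * (1 + |Real.log ρ|) + ρ * max (Real.log θ) 0) ∧
        C⁻¹ * (a * θ ^ 4 + ρ ^ ((5 : ℝ) / 3) + ρ * θ) ≤
          (3 / 2) * θ ^ ((5 : ℝ) / 2) * Pfun Zt (ρ * θ ^ (-((3 : ℝ) / 2))) +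
            3 * a * θ ^ 4 := by
  obtain ⟨C, hCdef⟩ : ∃ C : ℝ, C = 4 + |Real.log Zt| + 3 * (1 + Zt ^ ((2 : ℝ) / 3)) :=
    ⟨_, rfl⟩
  have hZt23 : (0:ℝ) < Zt ^ ((2:ℝ)/3) := Real.rpow_pos_of_pos hZt _
  have habs : (0:ℝ) ≤ |Real.log Zt| := abs_nonneg _
  have hCpos : 0 < C := by rw [hCdef]; positivity
  have hC4 : (4:ℝ) ≤ C := by rw [hCdef]; nlinarith
  have hClogZt : 1 + |Real.log Zt| ≤ C := by rw [hCdef]; nlinarith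
  refine ⟨C, hCpos, fun ρ θ a hρ hθ ha => ?_⟩
  have hθ32 : (0:ℝ) < θ ^ (-((3:ℝ)/2)) := Real.rpow_pos_of_pos hθ _
  obtain ⟨Z, hZdef⟩ : ∃ Z : ℝ, Z = ρ * θ ^ (-((3:ℝ)/2)) := ⟨_, rfl⟩
  rw [← hZdef]
  have hZ : 0 < Z := by rw [hZdef]; exact mul_pos hρ hθ32
  have hθ3 : (0:ℝ) ≤ θ ^ 3 := by positivity
  have haθ3 : (0:ℝ) ≤ a * θ ^ 3 := mul_nonneg ha hθ3
  have haθ4 : (0:ℝ) ≤ a * θ ^ 4 := by positivity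
  have hmax : (0:ℝ) ≤ max (Real.log θ) 0 := le_max_right _ _
  have hθ52 : (0:ℝ) < θ ^ ((5:ℝ)/2) := Real.rpow_pos_of_pos hθ _
  -- key identities
  have key1 : θ ^ ((5:ℝ)/2) * Z = ρ * θ := by
    rw [hZdef,
      show θ ^ ((5:ℝ)/2) * (ρ * θ ^ (-((3:ℝ)/2))) = ρ * (θ ^ ((5:ℝ)/2) * θ ^ (-((3:ℝ)/2))) by
        ring,
      ← Real.rpow_add hθ]
    norm_num
  have key2 : θ ^ ((5:ℝ)/2) * Z ^ ((5:ℝ)/3) = ρ ^ ((5:ℝ)/3) := by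
    rw [hZdef, Real.mul_rpow hρ.le hθ32.le, ← Real.rpow_mul hθ.le,
      show (-((3:ℝ)/2)) * ((5:ℝ)/3) = -((5:ℝ)/2) by norm_num,
      show θ ^ ((5:ℝ)/2) * (ρ ^ ((5:ℝ)/3) * θ ^ (-((5:ℝ)/2))) =
        ρ ^ ((5:ℝ)/3) * (θ ^ ((5:ℝ)/2) * θ ^ (-((5:ℝ)/2))) from by ring,
      ← Real.rpow_add hθ]
    norm_num
  have hlogZ : Real.log Z = Real.log ρ + (-((3:ℝ)/2)) * Real.log θ := by
    rw [hZdef, Real.log_mul hρ.ne' hθ32.ne', Real.log_rpow hθ]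
  have hSnn : 0 ≤ Sfun Zt Z := by
    rw [Sfun]
    split_ifs with h
    · have : Real.log (Z / Zt) ≤ 0 := Real.log_nonpos (by positivity) (by
        rw [div_le_one hZt]; exact h)
      linarith
    · positivity
  refine ⟨by nlinarith [mul_nonneg hρ.le hSnn], ?_, ?_⟩
  · -- entropy upper bound
    rw [Sfun]
    split_ifs with h
    · rw [Real.log_div hZ.ne' hZt.ne', hlogZ]
      have t1 : ρ * (-Real.log ρ) ≤ ρ * |Real.log ρ| :=
        mul_le_mul_of_nonneg_left (neg_le_abs _) hρ.le
      have t2 : ρ * Real.log θ ≤ ρ * max (Real.log θ) 0 :=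
        mul_le_mul_of_nonneg_left (le_max_left _ _) hρ.le
      have t3 : ρ * Real.log Zt ≤ ρ * |Real.log Zt| :=
        mul_le_mul_of_nonneg_left (le_abs_self _) hρ.le
      have t4 : ρ * (1 + |Real.log Zt|) ≤ ρ * C := mul_le_mul_of_nonneg_left hClogZt hρ.le
      have t5 : (0:ℝ) ≤ (C - 1) * (ρ * |Real.log ρ|) :=
        mul_nonneg (by linarith) (mul_nonneg hρ.le (abs_nonneg _))
      have t6 : (0:ℝ) ≤ (C - 3/2) * (ρ * max (Real.log θ) 0) :=
        mul_nonneg (by linarith) (mul_nonneg hρ.le hmax)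
      have t7 : (0:ℝ) ≤ (C - 4) * (a * θ ^ 3) := mul_nonneg (by linarith) haθ3
      linarith [t1, t2, t3, t4, t5, t6, t7]
    · have hS1 : Zt / Z ≤ 1 := by rw [div_le_one hZ]; linarith [not_le.mp h]
      have t0 : ρ * (Zt / Z) ≤ ρ * 1 := mul_le_mul_of_nonneg_left hS1 hρ.le
      have t5 : (0:ℝ) ≤ C * (ρ * |Real.log ρ|) :=
        mul_nonneg hCpos.le (mul_nonneg hρ.le (abs_nonneg _))
      have t6 : (0:ℝ) ≤ C * (ρ * max (Real.log θ) 0) :=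
        mul_nonneg hCpos.le (mul_nonneg hρ.le hmax)
      have t7 : (0:ℝ) ≤ (C - 4) * (a * θ ^ 3) := mul_nonneg (by linarith) haθ3
      have t8 : (0:ℝ) ≤ (C - 1) * ρ := mul_nonneg (by linarith) hρ.le
      linarith [t0, t5, t6, t7, t8]
  · -- energy lower bound
    have hCinv3 : C⁻¹ ≤ 3 := by
      rw [inv_eq_one_div, div_le_iff₀ hCpos]; linarith
    rw [Pfun]
    split_ifs with h
    · rw [mul_assoc, key1]
      have hρle : ρ ≤ Zt * θ ^ ((3:ℝ)/2) := by
        have hρZ : ρ = Z * θ ^ ((3:ℝ)/2) := by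
          rw [hZdef, mul_assoc, ← Real.rpow_add hθ]; norm_num
        rw [hρZ]
        exact mul_le_mul_of_nonneg_right h (Real.rpow_pos_of_pos hθ _).le
      have h23 : ρ ^ ((2:ℝ)/3) ≤ Zt ^ ((2:ℝ)/3) * θ := by
        calc ρ ^ ((2:ℝ)/3) ≤ (Zt * θ ^ ((3:ℝ)/2)) ^ ((2:ℝ)/3) :=
              Real.rpow_le_rpow hρ.le hρle (by norm_num)
          _ = Zt ^ ((2:ℝ)/3) * θ := by
              rw [Real.mul_rpow hZt.le (Real.rpow_pos_of_pos hθ _).le,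
                ← Real.rpow_mul hθ.le]
              norm_num
      have hρ53 : ρ ^ ((5:ℝ)/3) ≤ Zt ^ ((2:ℝ)/3) * (ρ * θ) := by
        rw [show (5:ℝ)/3 = 1 + 2/3 by norm_num, Real.rpow_add hρ, Real.rpow_one]
        linarith [mul_le_mul_of_nonneg_left h23 hρ.le]
      have h1 : C⁻¹ * (1 + Zt ^ ((2:ℝ)/3)) ≤ 3/2 := by
        rw [inv_mul_le_iff₀ hCpos, hCdef]; linarith
      have hρθ : (0:ℝ) < ρ * θ := mul_pos hρ hθ
      have e1 : C⁻¹ * (a * θ ^ 4) ≤ 3 * (a * θ ^ 4) := mul_le_mul_of_nonneg_right hCinv3 haθ4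
      have e2 : C⁻¹ * ρ ^ ((5:ℝ)/3) ≤ C⁻¹ * (Zt ^ ((2:ℝ)/3) * (ρ * θ)) :=
        mul_le_mul_of_nonneg_left hρ53 (inv_pos.mpr hCpos).le
      have e3 : C⁻¹ * ((1 + Zt ^ ((2:ℝ)/3)) * (ρ * θ)) ≤ 3/2 * (ρ * θ) := by
        rw [← mul_assoc]
        exact mul_le_mul_of_nonneg_right h1 hρθ.le
      linarith [e1, e2, e3]
    · -- P big branch
      have hZgt : Zt < Z := not_le.mp h
      obtain ⟨s, hsdef⟩ : ∃ s : ℝ, s = Zt ^ (-((2:ℝ)/3)) := ⟨_, rfl⟩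
      have hs : 0 < s := by rw [hsdef]; exact Real.rpow_pos_of_pos hZt _
      have hst : s * Zt ^ ((2:ℝ)/3) = 1 := by
        rw [hsdef, ← Real.rpow_add hZt]; norm_num
      have hZ53 : Zt ^ ((2:ℝ)/3) * Z ≤ Z ^ ((5:ℝ)/3) := by
        rw [show (5:ℝ)/3 = 2/3 + 1 by norm_num, Real.rpow_add hZ, Real.rpow_one]
        have h1 := Real.rpow_le_rpow hZt.le hZgt.le (by norm_num : (0:ℝ) ≤ 2/3)
        have := mul_le_mul_of_nonneg_right h1 hZ.le
        linarith
      have hA : C⁻¹ ≤ 9/20 * s := by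
        rw [inv_eq_one_div, div_le_iff₀ hCpos, hCdef]
        have := mul_nonneg hs.le habs
        linarith [hst, hs]
      have hB : C⁻¹ ≤ 9/20 := by
        rw [inv_eq_one_div, div_le_iff₀ hCpos]; linarith
      have hρ53' : Zt ^ ((2:ℝ)/3) * (ρ * θ) ≤ ρ ^ ((5:ℝ)/3) := by
        have := mul_le_mul_of_nonneg_left hZ53 hθ52.le
        calc Zt ^ ((2:ℝ)/3) * (ρ * θ) = Zt ^ ((2:ℝ)/3) * (θ ^ ((5:ℝ)/2) * Z) := by rw [key1]
          _ ≤ θ ^ ((5:ℝ)/2) * Z ^ ((5:ℝ)/3) := by linarith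
          _ = ρ ^ ((5:ℝ)/3) := key2
      have e1 : C⁻¹ * (a * θ ^ 4) ≤ 3 * (a * θ ^ 4) := mul_le_mul_of_nonneg_right hCinv3 haθ4
      have hρ53pos : (0:ℝ) ≤ ρ ^ ((5:ℝ)/3) := (Real.rpow_pos_of_pos hρ _).le
      have e2 : C⁻¹ * ρ ^ ((5:ℝ)/3) ≤ 9/20 * s * ρ ^ ((5:ℝ)/3) :=
        mul_le_mul_of_nonneg_right hA hρ53pos
      have e3 : C⁻¹ * (ρ * θ) ≤ 9/20 * (ρ * θ) :=
        mul_le_mul_of_nonneg_right hB (mul_pos hρ hθ).le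
      have e4 : 9/20 * s * (Zt ^ ((2:ℝ)/3) * (ρ * θ)) ≤ 9/20 * s * ρ ^ ((5:ℝ)/3) :=
        mul_le_mul_of_nonneg_left hρ53' (by positivity)
      have e4' : 9/20 * (ρ * θ) ≤ 9/20 * s * ρ ^ ((5:ℝ)/3) := by
        have hrw : 9/20 * s * (Zt ^ ((2:ℝ)/3) * (ρ * θ)) =
            9/20 * (s * Zt ^ ((2:ℝ)/3)) * (ρ * θ) := by ring
        rw [hrw, hst] at e4
        linarith
      have e5 : (0:ℝ) ≤ θ ^ ((5:ℝ)/2) * Zt := mul_nonneg hθ52.le hZt.le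
      have key2s : s * (θ ^ ((5:ℝ)/2) * Z ^ ((5:ℝ)/3)) = s * ρ ^ ((5:ℝ)/3) := by
        rw [key2]
      rw [← hsdef]
      linarith [e1, e2, e3, e4', e5, key2s]
end
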